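/- arXiv:1503.04706 — 6 statements merged into one kernel-verified Lean document; each statement's English description precedes it below -/
import Mathlib

section
/- In a partial cube G, for every pair of adjacent vertices u,v, the subgraph W_{uv} induced on the vertices strictly closer to u than to v is convex. -/
open SimpleGraph

universe u

variable {V : Type u}

/-- The Djoković–Winkler relation on ordered pairs of vertices:
`ab Θ xy` iff `d(a,x) + d(b,y) ≠ d(a,y) + d(b,x)`. -/
def ThetaV (G : SimpleGraph V) (a b x y : V) : Prop :=
  G.dist a x + G.dist b y ≠ G.dist a y + G.dist b x

/-- The Djoković–Winkler relation `Θ` on unordered edges. -/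
def Theta (G : SimpleGraph V) (e f : Sym2 V) : Prop :=
  ∃ a b x y : V, e = s(a, b) ∧ f = s(x, y) ∧ ThetaV G a b x y

/-- A partial cube: a connected graph isometrically embeddable into a hypercube,
i.e. there is a map to boolean vectors such that graph distance equals Hamming distance. -/
def IsPartialCube (G : SimpleGraph V) : Prop :=
  G.Connected ∧ ∃ (I : Type u) (h : V → I → Bool),
    ∀ u v : V, {i : I | h u i ≠ h v i}.Finite ∧ G.dist u v = {i : I | h u i ≠ h v i}.ncard

/-- A set of vertices is convex if it contains every shortest path between its members. -/
def IsConvexSet (G : SimpleGraph V) (S : Set V) : Prop :=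
  ∀ u ∈ S, ∀ v ∈ S, ∀ p : G.Walk u v, p.length = G.dist u v → ∀ x ∈ p.support, x ∈ S

/-- `W_{uv}`: vertices strictly closer to `u` than to `v`. -/
def Wset (G : SimpleGraph V) (u v : V) : Set V := {w | G.dist u w < G.dist v w}

/-- `U_{uv}`: vertices of `W_{uv}` with a neighbour in `W_{vu}`. -/
def Uset (G : SimpleGraph V) (u v : V) : Set V :=
  {w | w ∈ Wset G u v ∧ ∃ z, G.Adj w z ∧ z ∈ Wset G v u}

/-- The interval `I(a,b)`: vertices lying on some shortest `a,b`-path. -/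
def GInterval (G : SimpleGraph V) (a b : V) : Set V :=
  {x | G.dist a x + G.dist x b = G.dist a b}

/-- An isometric cycle: distances along the cycle agree with distances in `G`. -/
def IsIsometricCycle (G : SimpleGraph V) {u : V} (c : G.Walk u u) : Prop :=
  c.IsCycle ∧ ∀ i j : ℕ, i ≤ c.length → j ≤ c.length →
    G.dist (c.getVert i) (c.getVert j) =
      min (max i j - min i j) (c.length - (max i j - min i j))

/-- A convex cycle: a cycle whose vertex set is convex. -/
def IsConvexCycle (G : SimpleGraph V) {u : V} (c : G.Walk u u) : Prop :=
  c.IsCycle ∧ IsConvexSet G {x | x ∈ c.support}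

/-- `S` and `E` are the vertex set and edge set of an isometric cycle of `G`. -/
def IsIsometricCycleOn (G : SimpleGraph V) (S : Set V) (E : Set (Sym2 V)) : Prop :=
  ∃ (u : V) (c : G.Walk u u), IsIsometricCycle G c ∧
    S = {x | x ∈ c.support} ∧ E = {e | e ∈ c.edges}

/-- `S` and `E` are the vertex set and edge set of a convex cycle of `G`. -/
def IsConvexCycleOn (G : SimpleGraph V) (S : Set V) (E : Set (Sym2 V)) : Prop :=
  ∃ (u : V) (c : G.Walk u u), IsConvexCycle G c ∧
    S = {x | x ∈ c.support} ∧ E = {e | e ∈ c.edges}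

/-- A traverse from the edge `v1u1` to the edge `v2u2`: a sequence of isometric cycles,
given by their vertex sets `S i` and edge sets `E i`, such that `v1u1` lies only on the
first cycle, `v2u2` lies only on the last one, consecutive cycles meet in exactly one
edge which is `Θ`-related to `v1u1`, non-consecutive cycles are disjoint, and a shortest
`v1,v2`-path of `G` runs along the union of the cycles. -/
def IsTraverse (G : SimpleGraph V) (v1 u1 v2 u2 : V) {n : ℕ}
    (S : Fin n → Set V) (E : Fin n → Set (Sym2 V)) : Prop :=
  1 ≤ n ∧
  (∀ i, IsIsometricCycleOn G (S i) (E i)) ∧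
  (∀ i : Fin n, s(v1, u1) ∈ E i ↔ (i : ℕ) = 0) ∧
  (∀ i : Fin n, s(v2, u2) ∈ E i ↔ (i : ℕ) = n - 1) ∧
  (∀ i j : Fin n, (i : ℕ) + 1 = (j : ℕ) →
    ∃ x y : V, G.Adj x y ∧ Theta G s(x, y) s(v1, u1) ∧
      S i ∩ S j = {x, y} ∧ E i ∩ E j = {s(x, y)}) ∧
  (∀ i j : Fin n, (i : ℕ) + 1 < (j : ℕ) → S i ∩ S j = ∅) ∧
  (∃ p : G.Walk v1 v2, p.length = G.dist v1 v2 ∧ ∀ e ∈ p.edges, ∃ i, e ∈ E i)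

/-- A convex traverse: a traverse all of whose cycles are convex. -/
def IsConvexTraverse (G : SimpleGraph V) (v1 u1 v2 u2 : V) {n : ℕ}
    (S : Fin n → Set V) (E : Fin n → Set (Sym2 V)) : Prop :=
  IsTraverse G v1 u1 v2 u2 S E ∧ ∀ i, IsConvexSet G (S i)

/-- Two cycles intertwine if they share a path with at least two edges and all their
other vertices are pairwise distinct. -/
def Intertwine (G : SimpleGraph V) {a b : V} (c1 : G.Walk a a) (c2 : G.Walk b b) : Prop :=
  ∃ (x y : V) (p : G.Walk x y), p.IsPath ∧ 2 ≤ p.length ∧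
    (∀ e ∈ p.edges, e ∈ c1.edges ∧ e ∈ c2.edges) ∧
    {z | z ∈ c1.support} ∩ {z | z ∈ c2.support} = {z | z ∈ p.support}

/-- in a partial cube, `W_{uv}` is convex for every edge `uv`. -/
theorem stmt1 (G : SimpleGraph V) (h : IsPartialCube G) {u v : V} (huv : G.Adj u v) :
    IsConvexSet G (Wset G u v) := by
  classical
  obtain ⟨hconn, I, f, hf⟩ := h
  set D : V → V → Set I := fun a b => {i | f a i ≠ f b i} with hDdef
  have hfin : ∀ a b, (D a b).Finite := fun a b => (hf a b).1
  have hdist : ∀ a b, G.dist a b = (D a b).ncard := fun a b => (hf a b).2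
  have hduv : G.dist u v = 1 := dist_eq_one_iff_adj.mpr huv
  obtain ⟨i₀, hi₀⟩ : ∃ i, D u v = {i} := by
    rw [← Set.ncard_eq_one, ← hdist, hduv]
  have hne : f u i₀ ≠ f v i₀ := by
    have : i₀ ∈ D u v := hi₀ ▸ rfl
    exact this
  -- characterization of Wset
  have hchar : ∀ w, w ∈ Wset G u v ↔ f w i₀ = f u i₀ := by
    intro w
    have hcoord : ∀ i, i ≠ i₀ → f u i = f v i := by
      intro i hi
      by_contra hc
      exact hi (by have : i ∈ D u v := hc; rwa [hi₀] at this)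
    constructor
    · intro hw
      by_contra hc
      have h1 : D u w = insert i₀ (D v w) := by
        ext i
        by_cases hii : i = i₀
        · subst hii
          exact iff_of_true (fun hh => hc hh.symm) (Set.mem_insert _ _)
        · simp only [Set.mem_insert_iff, hDdef, Set.mem_setOf_eq]
          rw [hcoord i hii]
          tauto
      have h2 : i₀ ∉ D v w := by
        intro hm
        exact hm (by
          have := hc
          cases hb : f w i₀ <;> cases hu : f u i₀ <;> cases hv : f v i₀ <;>
            simp_all)
      have : (D u w).ncard = (D v w).ncard + 1 := by
        rw [h1, Set.ncard_insert_of_notMem h2 (hfin v w)]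
      have hlt := hw
      simp only [Wset, Set.mem_setOf_eq, hdist] at hlt
      omega
    · intro hw
      have h2 : i₀ ∉ D u w := fun hm => hm hw.symm
      have h1 : D v w = insert i₀ (D u w) := by
        ext i
        by_cases hii : i = i₀
        · subst hii
          exact iff_of_true (fun hc => hne ((hc.trans hw).symm)) (Set.mem_insert _ _)
        · simp only [Set.mem_insert_iff, hDdef, Set.mem_setOf_eq]
          rw [← hcoord i hii]
          tauto
      have : (D v w).ncard = (D u w).ncard + 1 := by
        rw [h1, Set.ncard_insert_of_notMem h2 (hfin u w)]
      simp only [Wset, Set.mem_setOf_eq, hdist]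
      omega
  intro a ha b hb p hp x hx
  rw [hchar] at ha hb ⊢
  -- split the walk at x
  have hsum : G.dist a x + G.dist x b = G.dist a b := by
    have hsplit := congr_arg Walk.length (p.take_spec hx)
    rw [Walk.length_append] at hsplit
    have h1 := G.dist_le (p.takeUntil x hx)
    have h2 := G.dist_le (p.dropUntil x hx)
    have h3 := hconn.dist_triangle (u := a) (v := x) (w := b)
    omega
  -- D a b = D a x ∪ D x b
  have hsub : D a b ⊆ D a x ∪ D x b := by
    intro i hi
    by_cases hc : f a i = f x i
    · right; intro hcc; exact hi (hc.trans hcc)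
    · left; exact hc
  have hcard : (D a x ∪ D x b).ncard ≤ (D a b).ncard := by
    calc (D a x ∪ D x b).ncard ≤ (D a x).ncard + (D x b).ncard :=
          Set.ncard_union_le _ _
      _ = (D a b).ncard := by rw [← hdist, ← hdist, ← hdist, hsum]
  have heq : D a b = D a x ∪ D x b :=
    Set.eq_of_subset_of_ncard_le hsub hcard ((hfin a x).union (hfin x b))
  have hi0ab : i₀ ∉ D a b := fun hm => hm (ha.trans hb.symm)
  rw [heq] at hi0ab
  have : i₀ ∉ D a x := fun hm => hi0ab (Or.inl hm)
  have : f a i₀ = f x i₀ := by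
    by_contra hc; exact this hc
  rw [← this]; exact ha
end

section
/- In a partial cube, if C is a cycle and e an edge of C, then C contains another edge (distinct from e) in relation Θ with e. -/
/-!
Partial cubes are bipartite: along an edge exactly one coordinate flips, so the distance to any
fixed vertex changes by one. In a bipartite graph every vertex `v` reachable from an edge `ab` is
strictly closer to exactly one of `a` and `b`, so `ab Θ xy` holds as soon as `x` and `y` lie on
different sides of the cut `(W_ab, W_ba)`. A closed walk crosses this cut an even number of times,
and `ab` is one crossing; in a cycle the remaining odd number of crossings supplies the other edge.
-/

open SimpleGraph

universe u

variable {V : Type u}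

theorem List.exists_mem_ne_of_even_countP {α : Type*} [DecidableEq α] {l : List α}
    {p : α → Bool} (hl : l.Nodup) {a : α} (ha : a ∈ l) (hpa : p a = true)
    (heven : Even (l.countP p)) : ∃ b ∈ l, b ≠ a ∧ p b = true := by
  have hcount : l.countP p = (l.erase a).countP p + 1 := by
    rw [(List.perm_cons_erase ha).countP_eq, List.countP_cons, if_pos hpa]
  have hpos : 0 < (l.erase a).countP p := by
    obtain ⟨k, hk⟩ := heven
    omega
  obtain ⟨b, hb, hpb⟩ := List.countP_pos_iff.mp hpos
  exact ⟨b, ((hl.mem_erase_iff).mp hb).2, ((hl.mem_erase_iff).mp hb).1, hpb⟩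

theorem Set.ncard_setOf_ne_eq_add_one_or {I : Type*} {p q r : I → Bool} {i : I}
    (hqr : {j | q j ≠ r j} = {i}) (hpq : {j | p j ≠ q j}.Finite) :
    {j | p j ≠ r j}.ncard = {j | p j ≠ q j}.ncard + 1 ∨
      {j | p j ≠ q j}.ncard = {j | p j ≠ r j}.ncard + 1 := by
  have hri : r i = !q i := by
    have : q i ≠ r i := Set.ext_iff.mp hqr i |>.mpr rfl
    cases hq : q i <;> cases hr : r i <;> simp_all
  have hr : ∀ j ≠ i, r j = q j := fun j hj =>
    not_not.mp fun h => hj (Set.ext_iff.mp hqr j |>.mp (Ne.symm h))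
  by_cases hi : p i ≠ q i
  · have hdiff : {j | p j ≠ r j} = {j | p j ≠ q j} \ {i} := by
      ext j
      obtain rfl | hj := eq_or_ne j i
      · cases hp : p j <;> cases hq : q j <;> simp_all
      · simp [hr j hj, hj]
    exact Or.inr (by rw [hdiff, Set.ncard_sdiff_singleton_add_one hi hpq])
  · have hins : {j | p j ≠ r j} = insert i {j | p j ≠ q j} := by
      ext j
      obtain rfl | hj := eq_or_ne j i
      · cases hp : p j <;> cases hq : q j <;> simp_all
      · simp [hr j hj, hj]
    exact Or.inl (by rw [hins, Set.ncard_insert_of_notMem hi hpq])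

variable {G : SimpleGraph V}

def crossesCut (g : V → Bool) : Sym2 V → Bool :=
  Sym2.lift ⟨fun x y => g x != g y, fun _ _ => bne_comm⟩

@[simp]
theorem crossesCut_mk (g : V → Bool) (x y : V) : crossesCut g s(x, y) = (g x != g y) := rfl

theorem SimpleGraph.Walk.even_countP_crossesCut_iff (g : V → Bool) {u v : V}
    (p : G.Walk u v) : Even (p.edges.countP (crossesCut g)) ↔ g u = g v := by
  induction p with
  | nil => simp
  | @cons x y w _ p ih =>
    rw [Walk.edges_cons, List.countP_cons, crossesCut_mk]
    cases hx : g x <;> cases hy : g y <;> cases hw : g w <;> simp_all [Nat.even_add_one]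

theorem IsPartialCube.dist_eq_add_one_or (h : IsPartialCube G) (v : V) {x y : V}
    (hxy : G.Adj x y) :
    G.dist v y = G.dist v x + 1 ∨ G.dist v x = G.dist v y + 1 := by
  obtain ⟨-, I, f, hf⟩ := h
  obtain ⟨i, hi⟩ : ∃ i, {j | f x j ≠ f y j} = {i} := by
    rw [← Set.ncard_eq_one, ← (hf x y).2]
    exact dist_eq_one_iff_adj.mpr hxy
  rw [(hf v y).2, (hf v x).2]
  exact Set.ncard_setOf_ne_eq_add_one_or hi (hf v x).1

theorem IsPartialCube.isBipartite (h : IsPartialCube G) : G.IsBipartite :=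
  two_colorable_iff_forall_loop_even.mpr fun v w =>
    let c : G.Coloring Bool := Coloring.mk (fun x => decide (Even (G.dist v x))) fun hxy => by
      rcases h.dist_eq_add_one_or v hxy with hd | hd <;>
        simp only [hd, Nat.even_add_one, ne_eq, decide_eq_decide] <;> tauto
    (c.even_length_iff_congr w).mpr Iff.rfl

namespace SimpleGraph.IsBipartite

theorem dist_ne_of_adj (hG : G.IsBipartite) {v x y : V} (hxy : G.Adj x y)
    (hvx : G.Reachable v x) : G.dist v x ≠ G.dist v y := by
  obtain ⟨p, hp⟩ := hvx.exists_walk_length_eq_dist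
  obtain ⟨q, hq⟩ := (hvx.trans hxy.reachable).exists_walk_length_eq_dist
  obtain ⟨k, hk⟩ := two_colorable_iff_forall_loop_even.mp hG v ((p.concat hxy).append q.reverse)
  rw [Walk.length_append, Walk.length_concat, Walk.length_reverse, hp, hq] at hk
  omega

theorem dist_eq_add_one_or (hG : G.IsBipartite) {a b v : V} (hab : G.Adj a b)
    (hav : G.Reachable a v) :
    G.dist a v = G.dist b v + 1 ∨ G.dist b v = G.dist a v + 1 := by
  have hne : G.dist v a ≠ G.dist v b := hG.dist_ne_of_adj hab hav.symm
  have hab_tri := hab.reachable.dist_triangle_left v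
  have hba_tri := hab.reachable.symm.dist_triangle_left v
  rw [dist_eq_one_iff_adj.mpr hab] at hab_tri
  rw [dist_eq_one_iff_adj.mpr hab.symm] at hba_tri
  rw [dist_comm, @dist_comm _ _ v b] at hne
  omega

theorem thetaV_of_not_iff_mem_wset (hG : G.IsBipartite) {a b x y : V} (hab : G.Adj a b)
    (hax : G.Reachable a x) (hay : G.Reachable a y)
    (hxy : ¬(x ∈ Wset G a b ↔ y ∈ Wset G a b)) : ThetaV G a b x y := by
  simp only [Wset, Set.mem_ofPred_eq] at hxy
  unfold ThetaV
  rcases hG.dist_eq_add_one_or hab hax with hx | hx <;>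
    rcases hG.dist_eq_add_one_or hab hay with hy | hy <;> omega

theorem exists_theta_of_mem_edges (hG : G.IsBipartite) {u : V} {c : G.Walk u u}
    (hc : c.IsTrail) {e : Sym2 V} (he : e ∈ c.edges) :
    ∃ f ∈ c.edges, f ≠ e ∧ Theta G e f := by
  classical
  induction e using Sym2.ind with | h a b => ?_
  have hab : G.Adj a b := c.adj_of_mem_edges he
  have hua : G.Reachable u a := ⟨c.takeUntil a (c.fst_mem_support_of_mem_edges he)⟩
  let side : V → Bool := fun v => decide (v ∈ Wset G a b)
  have hcross : crossesCut side s(a, b) = true := by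
    simp [side, Wset, dist_eq_one_iff_adj.mpr hab.symm]
  obtain ⟨f, hf, hfe, hfcross⟩ := List.exists_mem_ne_of_even_countP hc.edges_nodup he hcross
    ((c.even_countP_crossesCut_iff side).mpr rfl)
  refine ⟨f, hf, hfe, ?_⟩
  induction f using Sym2.ind with | h x y => ?_
  have hux : G.Reachable u x := ⟨c.takeUntil x (c.fst_mem_support_of_mem_edges hf)⟩
  have huy : G.Reachable u y := ⟨c.takeUntil y (c.snd_mem_support_of_mem_edges hf)⟩
  refine ⟨a, b, x, y, rfl, rfl, hG.thetaV_of_not_iff_mem_wset hab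
    (hua.symm.trans hux) (hua.symm.trans huy) ?_⟩
  simpa [side] using hfcross

end SimpleGraph.IsBipartite

/-- in a partial cube, every edge of a cycle is `Θ`-related to another
edge of the cycle. -/
theorem stmt4 (G : SimpleGraph V) (h : IsPartialCube G) {u : V}
    (c : G.Walk u u) (hc : c.IsCycle) (e : Sym2 V) (he : e ∈ c.edges) :
    ∃ f ∈ c.edges, f ≠ e ∧ Theta G e f :=
  h.isBipartite.exists_theta_of_mem_edges hc.isTrail he
end

section
/- In a partial cube, every interval I(a,b) (the subgraph induced by all vertices on shortest a,b-paths) is convex. -/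
open SimpleGraph

universe u

variable {V : Type u}

theorem stmt5_aux (G : SimpleGraph V) (hconn : G.Connected) (I : Type u) (h : V → I → Bool)
    (hI : ∀ u v : V, {i : I | h u i ≠ h v i}.Finite ∧ G.dist u v = {i : I | h u i ≠ h v i}.ncard)
    (a b : V) : IsConvexSet G (GInterval G a b) := by
  set D : V → V → Set I := fun u v => {i : I | h u i ≠ h v i} with hD
  have hfin : ∀ u v, (D u v).Finite := fun u v => (hI u v).1
  have hd : ∀ u v, G.dist u v = (D u v).ncard := fun u v => (hI u v).2
  -- key lemma: if dist u x + dist x w = dist u w then D u x ∩ D x w = ∅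
  have key : ∀ u x w : V, G.dist u x + G.dist x w = G.dist u w → D u x ∩ D x w = ∅ := by
    intro u x w heq
    have hsub : D u w ⊆ D u x ∪ D x w := by
      intro i hi
      by_cases hc : h u i = h x i
      · right; intro hc2; exact hi (hc.trans hc2)
      · left; exact hc
    have h1 : (D u x ∪ D x w).ncard + (D u x ∩ D x w).ncard = (D u x).ncard + (D x w).ncard :=
      Set.ncard_union_add_ncard_inter _ _ (hfin u x) (hfin x w)
    have h2 : (D u w).ncard ≤ (D u x ∪ D x w).ncard :=
      Set.ncard_le_ncard hsub ((hfin u x).union (hfin x w))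
    rw [hd u x, hd x w, hd u w] at heq
    have h3 : (D u x ∩ D x w).ncard = 0 := by omega
    exact (Set.ncard_eq_zero ((hfin u x).subset Set.inter_subset_left)).mp h3
  classical
  intro u hu v hv p hp x hx
  -- x lies on a shortest u-v path
  have hpx : G.dist u x + G.dist x v = G.dist u v := by
    have := congr_arg Walk.length (p.take_spec hx)
    rw [Walk.length_append] at this
    have h1 := G.dist_le (p.takeUntil x hx)
    have h2 := G.dist_le (p.dropUntil x hx)
    have h3 := hconn.dist_triangle (u := u) (v := x) (w := v)
    omega
  have hdu : D u x ∩ D x v = ∅ := key u x v hpx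
  have hda : D a u ∩ D u b = ∅ := key a u b hu
  have hdv : D a v ∩ D v b = ∅ := key a v b hv
  have hdx : D a x ∩ D x b = ∅ := by
    ext i
    simp only [Set.mem_inter_iff, Set.mem_empty_iff_false, iff_false, not_and]
    intro hax hxb
    simp only [hD, Set.mem_setOf_eq] at hax hxb
    have hab : h a i = h b i := by
      cases hb : h b i <;> cases ha : h a i <;> cases hxv : h x i <;>
        simp_all
    have hui : h u i = h a i := by
      by_contra hc
      have : i ∈ D a u ∩ D u b := ⟨hc ∘ Eq.symm, fun e => hxb (by rw [← hab]; exact (hc (e.symm ▸ hab.symm)).elim)⟩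
      · rw [hda] at this; exact this
    have hvi : h v i = h a i := by
      by_contra hc
      have : i ∈ D a v ∩ D v b := ⟨hc ∘ Eq.symm, fun e => hc (e.trans hab.symm)⟩
      rw [hdv] at this; exact this
    have : i ∈ D u x ∩ D x v :=
      ⟨fun e => hax (hui ▸ e.symm ▸ rfl), fun e => hax ((e.trans hvi).symm)⟩
    rw [hdu] at this; exact this
  -- now D a x ∪ D x b = D a b, disjoint
  have hunion : D a x ∪ D x b = D a b := by
    ext i
    constructor
    · rintro (hi | hi)
      · intro he
        have : i ∉ D x b := fun hm => (Set.eq_empty_iff_forall_notMem.mp hdx i) ⟨hi, hm⟩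
        simp only [hD, Set.mem_setOf_eq, not_not] at this hi ⊢
        exact hi (he.trans this.symm)
      · intro he
        have : i ∉ D a x := fun hm => (Set.eq_empty_iff_forall_notMem.mp hdx i) ⟨hm, hi⟩
        simp only [hD, Set.mem_setOf_eq, not_not] at this hi ⊢
        exact hi (this.symm.trans he)
    · intro hi
      by_cases hc : h a i = h x i
      · right; intro he; exact hi (hc.trans he)
      · left; exact hc
  show G.dist a x + G.dist x b = G.dist a b
  rw [hd a x, hd x b, hd a b, ← hunion,
    Set.ncard_union_eq (Set.disjoint_iff_inter_eq_empty.mpr hdx) (hfin a x) (hfin x b)]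

/-- in a partial cube, every interval `I(a,b)` is convex. -/
theorem stmt5 (G : SimpleGraph V) (h : IsPartialCube G) (a b : V) :
    IsConvexSet G (GInterval G a b) := by
  obtain ⟨hconn, I, hh, hI⟩ := h
  exact stmt5_aux G hconn I hh hI a b
end

section
/- In every isometric cycle of a partial cube, each pair of antipodal edges is in relation Θ. -/
open SimpleGraph

universe u

variable {V : Type u}

/-- in an isometric cycle of a partial cube, every pair of antipodal
edges is in relation `Θ`. -/
theorem stmt7 (G : SimpleGraph V) (h : IsPartialCube G) {u : V}
    (c : G.Walk u u) (hc : IsIsometricCycle G c) (k : ℕ) (hk : c.length = 2 * k)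
    (i : ℕ) (hi : i < k) :
    Theta G s(c.getVert i, c.getVert (i + 1))
      s(c.getVert (i + k), c.getVert (i + k + 1)) := by
  have hk3 : 3 ≤ c.length := hc.1.three_le_length
  refine ⟨_, _, _, _, rfl, rfl, ?_⟩
  have h1 := hc.2 i (i+k) (by omega) (by omega)
  have h2 := hc.2 (i+1) (i+k+1) (by omega) (by omega)
  have h3 := hc.2 i (i+k+1) (by omega) (by omega)
  have h4 := hc.2 (i+1) (i+k) (by omega) (by omega)
  unfold ThetaV
  omega
end

section
/- Let P = u0u1…um be a geodesic in a partial cube. If there exists another shortest u0,um-path distinct from P, then there is a convex cycle of the form (u_i u_{i+1} … u_j w_{j−1} w_{j−2} … w_{i+1}) for some 0 ≤ i < j−1 ≤ m−1, where the j−i−1 vertices w_{i+1},…,w_{j−1} do not lie on P. -/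
open SimpleGraph

universe u

variable {V : Type u}

/-!
Let `δ` be the least index distance between two vertices `u_i`, `u_{i+δ}` of `P` that are joined
by a second geodesic `Q`. By minimality, vertices of the segment `P' = u_i … u_{i+δ}` at distance
less than `δ` are joined by unique geodesics; hence `Q` meets `P'` only in its ends and `P' Q⁻¹`
is a cycle of length `2δ`.

For convexity, embed `G` in a hypercube with `u_i` at the origin, so that every vertex `z` becomes
a finite set `φ z` with `d(u, v) = |φ u ∆ φ v|`. The interval `I(u_i, u_{i+δ})` is then
`{z | φ z ⊆ φ u_{i+δ}}`, and intervals of partial cubes are convex. Along `P'` the sets form a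
chain `A_0 ⊂ ⋯ ⊂ A_δ`, each step adding one coordinate. For a vertex `z` of the interval off `P'`,
`φ z` is an up-set of this chain: if it contains the coordinate added at step `t`, the first edge
of a geodesic from `u_{i+t}` to `z` leads, by uniqueness of short geodesics, back onto `P'`, and
this forces `φ z` to contain the coordinate added at step `t + 1`. So `φ z = A_δ \ A_{δ - |φ z|}`,
which is also the set of the vertex of `Q` at distance `|φ z|` from `u_i`: the interval is exactly
the vertex set of the cycle.
-/

open scoped symmDiff

namespace SimpleGraph

variable {G : SimpleGraph V}

def HasUniqueGeodesic (G : SimpleGraph V) (u v : V) : Prop :=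
  ∀ p q : G.Walk u v, p.length = G.dist u v → q.length = G.dist u v → p = q

lemma HasUniqueGeodesic.symm {u v : V} (h : G.HasUniqueGeodesic u v) :
    G.HasUniqueGeodesic v u := by
  intro p q hp hq
  rw [← p.reverse_reverse, ← q.reverse_reverse,
    h p.reverse q.reverse (by rw [Walk.length_reverse, hp, dist_comm])
      (by rw [Walk.length_reverse, hq, dist_comm])]

lemma exists_ne_of_not_hasUniqueGeodesic {u v : V} (h : ¬ G.HasUniqueGeodesic u v)
    (p : G.Walk u v) : ∃ q : G.Walk u v, q.length = G.dist u v ∧ q ≠ p := by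
  simp only [HasUniqueGeodesic, not_forall] at h
  obtain ⟨q₁, q₂, hq₁, hq₂, hne⟩ := h
  by_cases hp : q₁ = p
  · exact ⟨q₂, hq₂, fun h => hne (hp.trans h.symm)⟩
  · exact ⟨q₁, hq₁, hp⟩

namespace Walk

variable {u v z : V}

lemma exists_isSubwalk_getVert (p : G.Walk u v) {k l : ℕ} (hkl : k ≤ l) (hl : l ≤ p.length) :
    ∃ q : G.Walk (p.getVert k) (p.getVert l), q.IsSubwalk p ∧ q.length = l - k := by
  have hend : (p.drop k).getVert (l - k) = p.getVert l := by
    rw [drop_getVert]; congr 1; omega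
  refine ⟨((p.drop k).take (l - k)).copy rfl hend, ?_, by simp; omega⟩
  simpa using
    ((p.drop k).isSubwalk_take (l - k)).trans (p.isSubwalk_drop k) |>.copy rfl hend rfl rfl

section Geodesic

variable {p : G.Walk u v} (hp : p.length = G.dist u v)
include hp

lemma dist_getVert_getVert {k l : ℕ} (hkl : k ≤ l) (hl : l ≤ p.length) :
    G.dist (p.getVert k) (p.getVert l) = l - k := by
  obtain ⟨q, hq, hql⟩ := p.exists_isSubwalk_getVert hkl hl
  rw [← length_eq_dist_of_subwalk hp hq, hql]

lemma dist_getVert {k : ℕ} (hk : k ≤ p.length) : G.dist u (p.getVert k) = k := by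
  simpa using dist_getVert_getVert hp (Nat.zero_le k) hk

lemma mem_interval_of_mem_support (hz : z ∈ p.support) : z ∈ GInterval G u v := by
  classical
  show G.dist u z + G.dist z v = G.dist u v
  rw [← length_eq_dist_of_subwalk hp (p.isSubwalk_takeUntil hz),
    ← length_eq_dist_of_subwalk hp (p.isSubwalk_dropUntil hz), ← length_append, take_spec, hp]

lemma getVert_dist_of_mem_support (hz : z ∈ p.support) : p.getVert (G.dist u z) = z := by
  obtain ⟨n, rfl, hn⟩ := mem_support_iff_exists_getVert.mp hz
  rw [dist_getVert hp hn]

lemma length_take_drop_eq_dist {i δ : ℕ} :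
    ((p.drop i).take δ).length = G.dist (p.getVert i) ((p.drop i).getVert δ) :=
  length_eq_dist_of_subwalk hp ((isSubwalk_take _ _).trans (isSubwalk_drop _ _))

lemma le_and_le_of_getVert_mem_interval {i j l : ℕ} (hij : i ≤ j) (hj : j ≤ p.length)
    (hl : l ≤ p.length) (h : p.getVert l ∈ GInterval G (p.getVert i) (p.getVert j)) :
    i ≤ l ∧ l ≤ j := by
  have hdist : ∀ k ≤ p.length, G.dist (p.getVert k) (p.getVert l) = max k l - min k l := by
    intro k hk
    rcases le_total k l with hkl | hlk
    · rw [dist_getVert_getVert hp hkl hl]; omega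
    · rw [dist_comm, dist_getVert_getVert hp hlk hk]; omega
  have h' : G.dist (p.getVert i) (p.getVert l) + G.dist (p.getVert l) (p.getVert j) =
      G.dist (p.getVert i) (p.getVert j) := h
  rw [hdist i (hij.trans hj), dist_comm, hdist j hj, dist_getVert_getVert hp hij hj] at h'
  omega

lemma mem_support_of_mem_interval (hconn : G.Connected) (huniq : G.HasUniqueGeodesic u v)
    (hz : z ∈ GInterval G u v) : z ∈ p.support := by
  obtain ⟨q₁, hq₁⟩ := hconn.exists_walk_length_eq_dist u z
  obtain ⟨q₂, hq₂⟩ := hconn.exists_walk_length_eq_dist z v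
  have hq : (q₁.append q₂).length = G.dist u v := by rw [length_append, hq₁, hq₂]; exact hz
  rw [← huniq _ _ hq hp, mem_support_append_iff]
  exact Or.inl q₁.end_mem_support

end Geodesic

lemma start_notMem_support_tail {p : G.Walk u v} (hp : p.IsPath) : u ∉ p.support.tail := by
  have h := hp.support_nodup
  rw [← cons_tail_support] at h
  exact (List.nodup_cons.mp h).1

section TwoGeodesics

variable {p q : G.Walk u v} (hp : p.length = G.dist u v) (hq : q.length = G.dist u v)
  (hne : q ≠ p)
  (huniq : ∀ a ∈ p.support, ∀ b ∈ p.support, G.dist a b < p.length → G.HasUniqueGeodesic a b)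
include hp hq hne

lemma one_lt_length_of_ne : 1 < p.length := by
  by_contra! h
  exact hne (eq_of_length_le_one (by omega) h)

include huniq

lemma getVert_notMem_support {m : ℕ} (hm₀ : 0 < m) (hm : m < p.length) :
    q.getVert m ∉ p.support := by
  classical
  intro hz
  have hzq := q.getVert_mem_support m
  have hdu : G.dist u (q.getVert m) = m := dist_getVert hq (by omega)
  have hdv : G.dist (q.getVert m) v = p.length - m := by
    have := dist_getVert_getVert hq (k := m) (l := q.length) (by omega) le_rfl
    rwa [getVert_length, hq, ← hp] at this
  apply hne
  rw [← q.take_spec hzq, ← p.take_spec hz]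
  congr 1
  · exact huniq u p.start_mem_support _ hz (by omega) _ _
      (length_eq_dist_of_subwalk hq (q.isSubwalk_takeUntil hzq))
      (length_eq_dist_of_subwalk hp (p.isSubwalk_takeUntil hz))
  · exact huniq _ hz v p.end_mem_support (by omega) _ _
      (length_eq_dist_of_subwalk hq (q.isSubwalk_dropUntil hzq))
      (length_eq_dist_of_subwalk hp (p.isSubwalk_dropUntil hz))

lemma isCycle_append_reverse : (p.append q.reverse).IsCycle := by
  have hpath := isPath_of_length_eq_dist p hp
  have hqrev := (isPath_of_length_eq_dist q hq).reverse
  refine hpath.isCycle_append hqrev (fun w hwp hwq => ?_)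
    (Or.inl (one_lt_length_of_ne hp hq hne))
  have hwv : w ≠ v := fun h => start_notMem_support_tail hqrev (h ▸ hwq)
  have hwu : w ≠ u := fun h => start_notMem_support_tail hpath (h ▸ hwp)
  have hwq' : w ∈ q.support := by
    simpa [support_reverse] using List.mem_of_mem_tail hwq
  obtain ⟨m, rfl, hm⟩ := mem_support_iff_exists_getVert.mp hwq'
  have hm₀ : 0 < m := Nat.pos_of_ne_zero fun h => hwu (by rw [h, getVert_zero])
  have hmlt : m < p.length := by
    rw [hp, ← hq]
    exact lt_of_le_of_ne hm fun h => hwv (by rw [h, getVert_length])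
  exact getVert_notMem_support hp hq hne huniq hm₀ hmlt (List.mem_of_mem_tail hwp)

end TwoGeodesics

lemma exists_segment_ne_geodesic {a b : V} {p q : G.Walk a b} (hp : p.length = G.dist a b)
    (hq : q.length = G.dist a b) (hne : q ≠ p) :
    ∃ i δ, i + δ ≤ p.length ∧
      ∃ r : G.Walk (p.getVert i) ((p.drop i).getVert δ),
        r.length = G.dist (p.getVert i) ((p.drop i).getVert δ) ∧ r ≠ (p.drop i).take δ ∧
        ∀ u ∈ ((p.drop i).take δ).support, ∀ v ∈ ((p.drop i).take δ).support,
          G.dist u v < δ → G.HasUniqueGeodesic u v := by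
  classical
  have hex : ∃ d k, k + d ≤ p.length ∧
      ¬ G.HasUniqueGeodesic (p.getVert k) (p.getVert (k + d)) :=
    ⟨p.length, 0, by simp, by simpa using fun h => hne (h q p hq hp)⟩
  obtain ⟨i, hiδ, hnu⟩ := Nat.find_spec hex
  set δ := Nat.find hex
  set P := (p.drop i).take δ
  have hP : P.length = G.dist _ _ := length_take_drop_eq_dist hp
  have hPlen : P.length = δ := by simp only [P, take_length, drop_length]; omega
  have hPv : ∀ k ≤ δ, P.getVert k = p.getVert (i + k) := by
    intro k hk
    simp [P, min_eq_right hk]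
  rw [← p.drop_getVert i δ] at hnu
  obtain ⟨r, hr, hrne⟩ := exists_ne_of_not_hasUniqueGeodesic hnu P
  have hmin : ∀ k l, k ≤ l → l ≤ δ → l - k < δ →
      G.HasUniqueGeodesic (P.getVert k) (P.getVert l) := by
    intro k l hkl hl hlk
    have := Nat.find_min hex hlk
    simp only [not_exists, not_and, not_not] at this
    rw [hPv k (by omega), hPv l hl]
    simpa [show i + k + (l - k) = i + l by omega] using this (i + k) (by omega)
  refine ⟨i, δ, hiδ, r, hr, hrne, fun u hu v hv huv => ?_⟩
  obtain ⟨k, rfl, hk⟩ := mem_support_iff_exists_getVert.mp hu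
  obtain ⟨l, rfl, hl⟩ := mem_support_iff_exists_getVert.mp hv
  rcases le_total k l with hkl | hlk
  · rw [dist_getVert_getVert hP hkl hl] at huv
    exact hmin k l hkl (hPlen ▸ hl) huv
  · rw [dist_comm, dist_getVert_getVert hP hlk hk] at huv
    exact (hmin l k hlk (hPlen ▸ hk) huv).symm

end Walk

end SimpleGraph

structure IsHammingEmbedding {I : Type*} (G : SimpleGraph V) (φ : V → Set I) : Prop where
  connected : G.Connected
  finite : ∀ z, (φ z).Finite
  dist_eq : ∀ u v, G.dist u v = (φ u ∆ φ v).ncard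

lemma IsPartialCube.exists_isHammingEmbedding {G : SimpleGraph V} (hG : IsPartialCube G)
    (x : V) : ∃ (I : Type u) (φ : V → Set I), IsHammingEmbedding G φ ∧ φ x = ∅ := by
  obtain ⟨hconn, I, f, hf⟩ := hG
  refine ⟨I, fun z => {i | f x i ≠ f z i}, ⟨hconn, fun z => (hf x z).1, fun u v => ?_⟩,
    by simp⟩
  rw [(hf u v).2]
  congr 1
  ext i
  simp only [Set.mem_symmDiff, Set.mem_ofPred_eq]
  cases f x i <;> cases f u i <;> cases f v i <;> simp

namespace IsHammingEmbedding

open SimpleGraph.Walk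

variable {G : SimpleGraph V} {I : Type*} {φ : V → Set I} (hφ : IsHammingEmbedding G φ)
  {u v w x y z : V}
include hφ

lemma injective : Function.Injective φ := fun u v h =>
  hφ.connected.dist_eq_zero_iff.mp (by rw [hφ.dist_eq, h, symmDiff_self, Set.bot_eq_empty,
    Set.ncard_empty])

lemma symmDiff_subset_of_mem_interval (hz : z ∈ GInterval G u v) :
    φ u ∆ φ z ⊆ φ u ∆ φ v := by
  set A := φ u ∆ φ z
  set B := φ z ∆ φ v
  have hA : A.Finite := (hφ.finite u).symmDiff (hφ.finite z)
  have hB : B.Finite := (hφ.finite z).symmDiff (hφ.finite v)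
  have hAB : φ u ∆ φ v = A ∆ B := by rw [symmDiff_assoc, symmDiff_symmDiff_cancel_left]
  have hcard : (A ∆ B).ncard = A.ncard + B.ncard := by
    rw [← hAB, ← hφ.dist_eq, ← hφ.dist_eq, ← hφ.dist_eq]
    exact hz.symm
  have hle : (A ∆ B).ncard ≤ (A ∪ B).ncard :=
    Set.ncard_le_ncard symmDiff_le_sup (hA.union hB)
  have hinter : (A ∩ B).ncard = 0 := by
    have := Set.ncard_union_add_ncard_inter A B hA hB
    omega
  have hdisj : Disjoint A B :=
    Set.disjoint_iff_inter_eq_empty.mpr ((Set.ncard_eq_zero (hA.inter_of_left B)).mp hinter)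
  rw [hAB, hdisj.symmDiff_eq_sup]
  exact Set.subset_union_left

lemma subset_union_of_mem_interval (hz : z ∈ GInterval G u v) : φ z ⊆ φ u ∪ φ v := by
  intro i hi
  by_contra! h
  rw [Set.mem_union, not_or] at h
  have := hφ.symmDiff_subset_of_mem_interval hz (Set.mem_symmDiff.mpr (Or.inr ⟨hi, h.1⟩))
  simp [Set.mem_symmDiff, h.1, h.2] at this

lemma inter_subset_of_mem_interval (hz : z ∈ GInterval G u v) : φ u ∩ φ v ⊆ φ z := by
  rintro i ⟨hu, hv⟩
  by_contra! h
  have := hφ.symmDiff_subset_of_mem_interval hz (Set.mem_symmDiff.mpr (Or.inl ⟨hu, h⟩))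
  simp_all [Set.mem_symmDiff]

lemma mem_interval_of_subset_of_subset (h₁ : φ u ⊆ φ z) (h₂ : φ z ⊆ φ v) :
    z ∈ GInterval G u v := by
  show G.dist u z + G.dist z v = G.dist u v
  rw [hφ.dist_eq, hφ.dist_eq, hφ.dist_eq, symmDiff_of_le h₁, symmDiff_of_le h₂,
    symmDiff_of_le (h₁.trans h₂), Set.ncard_sdiff h₁ (hφ.finite u),
    Set.ncard_sdiff h₂ (hφ.finite z), Set.ncard_sdiff (h₁.trans h₂) (hφ.finite u)]
  have := Set.ncard_le_ncard h₁ (hφ.finite z)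
  have := Set.ncard_le_ncard h₂ (hφ.finite v)
  omega

lemma exists_eq_symmDiff_singleton_of_adj (h : G.Adj u w) : ∃ c, φ w = φ u ∆ {c} := by
  obtain ⟨c, hc⟩ := Set.ncard_eq_one.mp (by rw [← hφ.dist_eq, dist_eq_one_iff_adj.mpr h])
  exact ⟨c, by rw [← hc, symmDiff_symmDiff_cancel_left]⟩

section Based

variable (hx : φ x = ∅)
include hx

lemma ncard_eq_dist (z : V) : (φ z).ncard = G.dist x z := by
  rw [hφ.dist_eq, hx, ← Set.bot_eq_empty, bot_symmDiff]

lemma mem_interval_iff_subset : z ∈ GInterval G x y ↔ φ z ⊆ φ y :=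
  ⟨fun h => by simpa [hx] using hφ.subset_union_of_mem_interval h,
    hφ.mem_interval_of_subset_of_subset (hx ▸ Set.empty_subset _)⟩

variable {P : G.Walk x y} (hP : P.length = G.dist x y)
include hP

lemma ncard_getVert {k : ℕ} (hk : k ≤ P.length) : (φ (P.getVert k)).ncard = k := by
  rw [hφ.ncard_eq_dist hx, P.dist_getVert hP hk]

lemma getVert_subset_getVert {k l : ℕ} (hkl : k ≤ l) (hl : l ≤ P.length) :
    φ (P.getVert k) ⊆ φ (P.getVert l) := by
  rw [← hφ.mem_interval_iff_subset hx]
  show G.dist x _ + G.dist _ _ = G.dist x _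
  rw [P.dist_getVert hP (hkl.trans hl), P.dist_getVert_getVert hP hkl hl, P.dist_getVert hP hl]
  omega

lemma getVert_subset {k : ℕ} (hk : k ≤ P.length) : φ (P.getVert k) ⊆ φ y := by
  simpa using hφ.getVert_subset_getVert hx hP hk le_rfl

lemma ncard_sdiff_getVert {k l : ℕ} (hkl : k ≤ l) (hl : l ≤ P.length) :
    (φ (P.getVert l) \ φ (P.getVert k)).ncard = l - k := by
  rw [Set.ncard_sdiff (hφ.getVert_subset_getVert hx hP hkl hl) (hφ.finite _),
    hφ.ncard_getVert hx hP hl, hφ.ncard_getVert hx hP (hkl.trans hl)]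

variable (huniq : ∀ a ∈ P.support, ∀ b ∈ P.support, G.dist a b < P.length →
  G.HasUniqueGeodesic a b)
include huniq

lemma getVert_ncard_of_subset_of_subset {k l : ℕ} (hkl : k ≤ l) (hl : l ≤ P.length)
    (hlk : l - k < P.length) (h₁ : φ (P.getVert k) ⊆ φ z) (h₂ : φ z ⊆ φ (P.getVert l)) :
    P.getVert (φ z).ncard = z := by
  obtain ⟨Q, hQ, -⟩ := P.exists_isSubwalk_getVert hkl hl
  have hzQ : z ∈ Q.support :=
    Q.mem_support_of_mem_interval (length_eq_dist_of_subwalk hP hQ) hφ.connected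
      (huniq _ (P.getVert_mem_support k) _ (P.getVert_mem_support l)
        (by rw [P.dist_getVert_getVert hP hkl hl]; omega))
      (hφ.mem_interval_of_subset_of_subset h₁ h₂)
  rw [hφ.ncard_eq_dist hx]
  exact P.getVert_dist_of_mem_support hP (hQ.support_subset hzQ)

lemma sdiff_getVert_add_two_subset (hz : z ∉ P.support) (hzy : φ z ⊆ φ y)
    {t : ℕ} (ht : t + 2 ≤ P.length) (h : φ (P.getVert (t + 1)) \ φ (P.getVert t) ⊆ φ z) :
    φ (P.getVert (t + 2)) \ φ (P.getVert (t + 1)) ⊆ φ z := by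
  set u := P.getVert (t + 1)
  obtain ⟨g, hg⟩ := hφ.connected.exists_walk_length_eq_dist u z
  have hg₀ : ¬ g.Nil := fun hn => hz (hn.eq ▸ P.getVert_mem_support _)
  have hw : g.snd ∈ GInterval G u z :=
    g.mem_interval_of_mem_support hg (g.getVert_mem_support 1)
  obtain ⟨c, hc⟩ := hφ.exists_eq_symmDiff_singleton_of_adj (g.adj_snd hg₀)
  by_cases hcu : c ∈ φ u
  · -- `g.snd` lies below `u` on the chain, so it is `P_t` and `c` is the coordinate added at
    -- step `t + 1`; but `c ∉ φ z`.
    exfalso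
    have hwu : φ g.snd = φ u \ {c} := by
      rw [hc, symmDiff_of_ge (Set.singleton_subset_iff.mpr hcu)]
    have hcz : c ∉ φ z := fun hcz => by
      simpa [hwu] using hφ.inter_subset_of_mem_interval hw ⟨hcu, hcz⟩
    have hwt : P.getVert t = g.snd := by
      have hcard : (φ g.snd).ncard = t := by
        rw [hwu, Set.ncard_sdiff_singleton_of_mem hcu, hφ.ncard_getVert hx hP (by omega)]; rfl
      rw [← hcard]
      refine hφ.getVert_ncard_of_subset_of_subset hx hP huniq (Nat.zero_le (t + 1)) (by omega)
        (by omega) ?_ (hwu ▸ Set.sdiff_subset)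
      simp [hx]
    exact hcz (h ⟨hcu, by simp [hwt, hwu]⟩)
  · -- `g.snd` lies above `u` on the chain, so it is `P_{t+2}` and `c ∈ φ z` is the coordinate
    -- added at step `t + 2`.
    have hwu : φ g.snd = insert c (φ u) := by
      rw [hc, (Set.disjoint_singleton_right.mpr hcu).symmDiff_eq_sup]
      exact Set.union_singleton
    have hcz : c ∈ φ z := ((hφ.subset_union_of_mem_interval hw)
      (hwu ▸ Set.mem_insert c _)).resolve_left hcu
    have hwt : P.getVert (t + 2) = g.snd := by
      have hcard : (φ g.snd).ncard = t + 2 := by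
        rw [hwu, Set.ncard_insert_of_notMem hcu (hφ.finite u), hφ.ncard_getVert hx hP (by omega)]
      rw [← hcard]
      refine hφ.getVert_ncard_of_subset_of_subset hx hP huniq (by omega : t + 1 ≤ P.length)
        le_rfl (by omega) (hwu ▸ Set.subset_insert c _) ?_
      rw [getVert_length, hwu]
      exact Set.insert_subset (hzy hcz) (hφ.getVert_subset hx hP (by omega))
    rw [hwt, hwu]
    rintro q ⟨rfl | hq, hqu⟩
    · exact hcz
    · exact absurd hq hqu

lemma diff_getVert_subset (hz : z ∉ P.support) (hzy : φ z ⊆ φ y)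
    {t : ℕ} (ht : t < P.length) (h : φ (P.getVert (t + 1)) \ φ (P.getVert t) ⊆ φ z) :
    φ y \ φ (P.getVert t) ⊆ φ z := by
  induction hn : P.length - (t + 1) generalizing t with
  | zero =>
    rwa [show t + 1 = P.length by omega, getVert_length] at h
  | succ n ih =>
    have hnext := ih (t := t + 1) (by omega)
      (hφ.sdiff_getVert_add_two_subset hx hP huniq hz hzy (by omega) h)
      (by omega)
    rintro q ⟨hqy, hqt⟩
    by_cases hq : q ∈ φ (P.getVert (t + 1))
    · exact h ⟨hq, hqt⟩
    · exact hnext ⟨hqy, hq⟩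

lemma eq_diff_getVert_of_notMem_support (hz : z ∉ P.support) (hzy : φ z ⊆ φ y) :
    φ z = φ y \ φ (P.getVert (P.length - (φ z).ncard)) := by
  set n := (φ z).ncard
  have hyl : φ y = φ (P.getVert P.length) := by rw [getVert_length]
  have hy : (φ y).ncard = P.length := by rw [hφ.ncard_eq_dist hx, hP]
  have hn : n ≤ P.length := hy ▸ Set.ncard_le_ncard hzy (hφ.finite y)
  have hdisj : ∀ t ≤ P.length - n, Disjoint (φ (P.getVert t)) (φ z) := by
    intro t ht
    induction t with
    | zero => simp [hx]
    | succ t ih =>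
      have hstep : (φ (P.getVert (t + 1)) \ φ (P.getVert t)).ncard = 1 := by
        rw [hφ.ncard_sdiff_getVert hx hP (Nat.le_succ t) (by omega)]; omega
      obtain ⟨e, he⟩ := Set.ncard_eq_one.mp hstep
      by_cases hez : e ∈ φ z
      · exfalso
        have hsub := hφ.diff_getVert_subset hx hP huniq hz hzy
          (t := t) (by omega) (he ▸ Set.singleton_subset_iff.mpr hez)
        have := Set.ncard_le_ncard hsub (hφ.finite z)
        rw [hyl, hφ.ncard_sdiff_getVert hx hP (by omega) le_rfl] at this
        omega
      · have hsplit : φ (P.getVert (t + 1)) ⊆ φ (P.getVert t) ∪ {e} := by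
          intro q hq
          by_cases hqt : q ∈ φ (P.getVert t)
          · exact Or.inl hqt
          · exact Or.inr (he ▸ ⟨hq, hqt⟩)
        exact Set.disjoint_of_subset_left hsplit (Set.disjoint_union_left.mpr
          ⟨ih (by omega), Set.disjoint_singleton_left.mpr hez⟩)
  refine Set.eq_of_subset_of_ncard_le
    (fun q hq => ⟨hzy hq, fun hq' => (hdisj _ le_rfl).ne_of_mem hq' hq rfl⟩) ?_
    (hφ.finite y).sdiff
  rw [hyl, hφ.ncard_sdiff_getVert hx hP (by omega) le_rfl]
  omega

end Based

end IsHammingEmbedding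

namespace IsPartialCube

open SimpleGraph.Walk

variable {G : SimpleGraph V}

theorem isConvexSet_interval (hG : IsPartialCube G) (x y : V) :
    IsConvexSet G (GInterval G x y) := by
  obtain ⟨I, φ, hφ, hx⟩ := hG.exists_isHammingEmbedding x
  intro u hu v hv p hp z hz
  rw [hφ.mem_interval_iff_subset hx] at hu hv ⊢
  exact (hφ.subset_union_of_mem_interval (p.mem_interval_of_mem_support hp hz)).trans
    (Set.union_subset hu hv)

variable (hG : IsPartialCube G) {x y : V} {P Q : G.Walk x y}
  (hP : P.length = G.dist x y) (hQ : Q.length = G.dist x y) (hne : Q ≠ P)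
  (huniq : ∀ a ∈ P.support, ∀ b ∈ P.support, G.dist a b < P.length → G.HasUniqueGeodesic a b)
include hG hP hQ hne huniq

lemma support_append_reverse_eq_interval :
    {z | z ∈ (P.append Q.reverse).support} = GInterval G x y := by
  obtain ⟨I, φ, hφ, hx⟩ := hG.exists_isHammingEmbedding x
  ext z
  simp only [Set.mem_ofPred_eq, mem_support_append_iff, support_reverse, List.mem_reverse]
  refine ⟨fun hz => hz.elim (P.mem_interval_of_mem_support hP) (Q.mem_interval_of_mem_support hQ),
    fun hz => or_iff_not_imp_left.mpr fun hzP => ?_⟩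
  rw [hφ.mem_interval_iff_subset hx] at hz
  set n := (φ z).ncard
  have hn₀ : 0 < n := by
    refine Nat.pos_of_ne_zero fun h => hzP ?_
    rw [hφ.injective (((Set.ncard_eq_zero (hφ.finite z)).mp h).trans hx.symm)]
    exact P.start_mem_support
  have hnP : n < P.length := by
    refine lt_of_le_of_ne ?_ fun h => hzP ?_
    · rw [hP, ← hφ.ncard_eq_dist hx y]
      exact Set.ncard_le_ncard hz (hφ.finite y)
    · rw [hφ.injective (Set.eq_of_subset_of_ncard_le hz
        (by rw [hφ.ncard_eq_dist hx y, ← hP, ← h]) (hφ.finite y))]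
      exact P.end_mem_support
  have hQn : (φ (Q.getVert n)).ncard = n := by
    rw [hφ.ncard_eq_dist hx, Q.dist_getVert hQ (by omega)]
  have hQP := getVert_notMem_support hP hQ hne huniq hn₀ hnP
  have hQy := (hφ.mem_interval_iff_subset hx).mp
    (Q.mem_interval_of_mem_support hQ (Q.getVert_mem_support n))
  have hφQ : φ (Q.getVert n) = φ z := by
    rw [hφ.eq_diff_getVert_of_notMem_support hx hP huniq hQP hQy,
      hφ.eq_diff_getVert_of_notMem_support hx hP huniq hzP hz, hQn]
  exact hφ.injective hφQ ▸ Q.getVert_mem_support n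

theorem isConvexCycle_append_reverse : IsConvexCycle G (P.append Q.reverse) :=
  ⟨isCycle_append_reverse hP hQ hne huniq,
    support_append_reverse_eq_interval hG hP hQ hne huniq ▸ hG.isConvexSet_interval x y⟩

end IsPartialCube

theorem stmt10_general (G : SimpleGraph V) (h : IsPartialCube G) {a b : V}
    (p : G.Walk a b) (hgeo : p.length = G.dist a b)
    (q : G.Walk a b) (hql : q.length = G.dist a b) (hne : q ≠ p) :
    ∃ i j : ℕ, i + 1 < j ∧ j ≤ p.length ∧
      ∃ c : G.Walk (p.getVert i) (p.getVert i), IsConvexCycle G c ∧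
        c.length = 2 * (j - i) ∧
        (∀ k ≤ j - i, c.getVert k = p.getVert (i + k)) ∧
        (∀ x ∈ c.support, x ∈ p.support → ∃ k, i ≤ k ∧ k ≤ j ∧ x = p.getVert k) := by
  obtain ⟨i, δ, hiδ, r, hr, hrne, huniq⟩ := Walk.exists_segment_ne_geodesic hgeo hql hne
  set P := (p.drop i).take δ
  have hP : P.length = G.dist _ _ := Walk.length_take_drop_eq_dist hgeo
  have hPlen : P.length = δ := by simp only [P, Walk.take_length, Walk.drop_length]; omega
  replace huniq : ∀ u ∈ P.support, ∀ v ∈ P.support, G.dist u v < P.length →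
      G.HasUniqueGeodesic u v := fun u hu v hv huv => huniq u hu v hv (hPlen ▸ huv)
  have hδ := Walk.one_lt_length_of_ne hP hr hrne
  refine ⟨i, i + δ, by omega, hiδ, P.append r.reverse,
    h.isConvexCycle_append_reverse hP hr hrne huniq, by simp; omega, fun k hk => ?_,
    fun z hz hzp => ?_⟩
  · rw [Walk.getVert_append', if_pos (by omega), Walk.take_getVert, Walk.drop_getVert,
      min_eq_right (by omega)]
  · have hzI : z ∈ GInterval G (p.getVert i) (p.getVert (i + δ)) := by
      rw [← Walk.drop_getVert, ← h.support_append_reverse_eq_interval hP hr hrne huniq]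
      exact hz
    obtain ⟨l, rfl, hl⟩ := Walk.mem_support_iff_exists_getVert.mp hzp
    obtain ⟨hil, hli⟩ := Walk.le_and_le_of_getVert_mem_interval hgeo (by omega) hiδ hl hzI
    exact ⟨l, hil, hli, rfl⟩

/-- if `P` is a geodesic in a partial cube and there is another shortest
path with the same endpoints, then there is a convex cycle consisting of a subpath
`u_i…u_j` of `P` together with `j−i−1` vertices not on `P`. -/
theorem stmt10 (G : SimpleGraph V) (h : IsPartialCube G) {a b : V}
    (p : G.Walk a b) (hp : p.IsPath) (hgeo : p.length = G.dist a b)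
    (q : G.Walk a b) (hq : q.IsPath) (hql : q.length = G.dist a b) (hne : q ≠ p) :
    ∃ i j : ℕ, i + 1 < j ∧ j ≤ p.length ∧
      ∃ c : G.Walk (p.getVert i) (p.getVert i), IsConvexCycle G c ∧
        c.length = 2 * (j - i) ∧
        (∀ k ≤ j - i, c.getVert k = p.getVert (i + k)) ∧
        (∀ x ∈ c.support, x ∈ p.support → ∃ k, i ≤ k ∧ k ≤ j ∧ x = p.getVert k) :=
  stmt10_general G h p hgeo q hql hne
end

section
/- In a partial cube, two distinct isometric cycles cannot share a path covering more than half of one of them; more precisely, if two isometric cycles of lengths l1 and l2 intersect in a path with m edges and m > l1/2, then the cycles are equal. -/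
open SimpleGraph

universe u

variable {V : Type u}

/-!
Embed `G` isometrically into a hypercube, so that every edge flips exactly one coordinate. In an
isometric cycle of length `2h`, opposite edges flip the same coordinate: this is the relation `Θ`
between antipodal edges. Read both cycles as sequences `u₁, u₂ : ℕ → V` that start along the
common path. Both cycles compute the distance between the ends of the path, which forces their
lengths to agree, and the sequences agree on their first `h + 2` terms since the path has more than
`h` edges. From then on, the next term of either sequence is the neighbour of the current one
across the coordinate flipped by the edge `h` steps back, which the two sequences share; so the
sequences, and hence the cycles, coincide.
-/

lemma SimpleGraph.Walk.IsTrail.length_le_of_edges_subset {G : SimpleGraph V} {x y a b : V}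
    {p : G.Walk x y} {q : G.Walk a b} (hp : p.IsTrail) (h : ∀ e ∈ p.edges, e ∈ q.edges) :
    p.length ≤ q.length := by
  simpa using (List.subperm_of_subset hp.edges_nodup h).length_le

section HammingEmbedding

variable {G : SimpleGraph V} {I : Type*} {f : V → I → Bool}

def diffCoords (f : V → I → Bool) (u v : V) : Set I := {i | f u i ≠ f v i}

lemma diffCoords_comm (u v : V) : diffCoords f u v = diffCoords f v u := by
  ext i
  simp [diffCoords, ne_comm]

def IsHammingEmbedding_s12 (G : SimpleGraph V) (f : V → I → Bool) : Prop :=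
  ∀ u v, (diffCoords f u v).Finite ∧ G.dist u v = (diffCoords f u v).ncard

namespace IsHammingEmbedding_s12

variable {u v w z z' : V} {i : I}

lemma exists_diffCoords_eq_singleton (hf : IsHammingEmbedding_s12 G f) (huv : G.Adj u v) :
    ∃ i, diffCoords f u v = {i} :=
  Set.ncard_eq_one.mp (by rw [← (hf u v).2, dist_eq_one_iff_adj.mpr huv])

lemma ne_of_diffCoords_eq_singleton (huv : diffCoords f u v = {i}) : f u i ≠ f v i := by
  change i ∈ diffCoords f u v
  simp [huv]

lemma dist_eq_dist_add_one (hf : IsHammingEmbedding_s12 G f) (huv : diffCoords f u v = {i})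
    (hw : f w i = f v i) : G.dist u w = G.dist v w + 1 := by
  have hins : diffCoords f u w = insert i (diffCoords f v w) := by
    ext j
    by_cases hj : j = i
    · subst hj
      simp [diffCoords, hw, ne_of_diffCoords_eq_singleton huv]
    · have : f u j = f v j := by
        by_contra hne
        have hmem : j ∈ diffCoords f u v := hne
        exact hj (by rwa [huv] at hmem)
      simp [diffCoords, hj, this]
  rw [(hf u w).2, (hf v w).2, hins,
    Set.ncard_insert_of_notMem (by simp [diffCoords, hw]) (hf v w).1]

lemma dist_eq_dist_add_one_of_ne (hf : IsHammingEmbedding_s12 G f) (huv : diffCoords f u v = {i})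
    (hw : f w i ≠ f v i) : G.dist v w = G.dist u w + 1 := by
  refine hf.dist_eq_dist_add_one ((diffCoords_comm v u).trans huv) ?_
  have := ne_of_diffCoords_eq_singleton huv
  cases h₁ : f w i <;> cases h₂ : f u i <;> cases h₃ : f v i <;> simp_all

lemma dist_lt_iff (hf : IsHammingEmbedding_s12 G f) (huv : diffCoords f u v = {i}) :
    G.dist v w < G.dist u w ↔ f w i = f v i := by
  by_cases hw : f w i = f v i
  · simp [hf.dist_eq_dist_add_one huv hw, hw]
  · simp [hf.dist_eq_dist_add_one_of_ne huv hw, hw]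

lemma dist_ne_of_adj (hf : IsHammingEmbedding_s12 G f) (huv : G.Adj u v) (w : V) :
    G.dist u w ≠ G.dist v w := by
  obtain ⟨i, hi⟩ := hf.exists_diffCoords_eq_singleton huv
  by_cases hw : f w i = f v i
  · simp [hf.dist_eq_dist_add_one hi hw]
  · simp [hf.dist_eq_dist_add_one_of_ne hi hw]

/-- The coordinate of the edge `uv` separates `u'` from `v'`. -/
lemma diffCoords_eq_of_dist_lt {u' v' : V} (hf : IsHammingEmbedding_s12 G f) (huv : G.Adj u v)
    (hu'v' : G.Adj u' v') (hu' : G.dist v u' < G.dist u u') (hv' : G.dist u v' < G.dist v v') :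
    diffCoords f u v = diffCoords f u' v' := by
  obtain ⟨i, hi⟩ := hf.exists_diffCoords_eq_singleton huv
  obtain ⟨i', hi'⟩ := hf.exists_diffCoords_eq_singleton hu'v'
  have hfu' : f u' i = f v i := (hf.dist_lt_iff hi).1 hu'
  have hfv' : f v' i ≠ f v i := fun h => (hf.dist_lt_iff hi).2 h |>.not_gt hv'
  have hmem : i ∈ diffCoords f u' v' := by
    change f u' i ≠ f v' i
    rw [hfu']
    exact Ne.symm hfv'
  rw [hi'] at hmem
  rw [hi, hi', hmem]

lemma eq_of_diffCoords_eq (hf : IsHammingEmbedding_s12 G f) (hconn : G.Connected)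
    (h : diffCoords f w z = diffCoords f w z') : z = z' := by
  have hempty : diffCoords f z z' = ∅ := by
    ext j
    have hj := Set.ext_iff.1 h j
    simp only [diffCoords, Set.mem_ofPred_eq] at hj
    simp only [diffCoords, Set.mem_ofPred_eq, Set.mem_empty_iff_false, iff_false, not_not]
    cases h₁ : f w j <;> cases h₂ : f z j <;> cases h₃ : f z' j <;> simp_all
  rw [← hconn.dist_eq_zero_iff, (hf z z').2, hempty, Set.ncard_empty]

end IsHammingEmbedding_s12

end HammingEmbedding

/-- `u t` is the `t`-th vertex of an isometric cycle of length `L`, indices taken modulo `L`. -/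
def IsCyclicIsometry (G : SimpleGraph V) (L : ℕ) (u : ℕ → V) : Prop :=
  ∀ i d, d ≤ L → G.dist (u i) (u (i + d)) = min d (L - d)

namespace IsCyclicIsometry

variable {G : SimpleGraph V} {L h : ℕ} {u u₁ u₂ : ℕ → V} {I : Type*} {f : V → I → Bool}

lemma adj (hu : IsCyclicIsometry G L u) (hL : 2 ≤ L) (i : ℕ) : G.Adj (u i) (u (i + 1)) :=
  dist_eq_one_iff_adj.mp (by rw [hu i 1 (by omega)]; omega)

lemma even (hu : IsCyclicIsometry G L u) (hf : IsHammingEmbedding_s12 G f) (hL : 2 ≤ L) : Even L := by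
  by_contra hodd
  obtain ⟨h, rfl⟩ := Nat.not_even_iff_odd.mp hodd
  have d₁ := hu 0 h (by omega)
  have d₂ := hu 0 (h + 1) (by omega)
  rw [zero_add, dist_comm] at d₁ d₂
  exact hf.dist_ne_of_adj (hu.adj hL h) (u 0) (by omega)

lemma diffCoords_eq_antipodal (hu : IsCyclicIsometry G (2 * h) u) (hf : IsHammingEmbedding_s12 G f)
    (hh : 0 < h) (k : ℕ) :
    diffCoords f (u k) (u (k + 1)) = diffCoords f (u (k + h)) (u (k + h + 1)) := by
  have d₁ := hu k h (by omega)
  have d₂ := hu (k + 1) (h - 1) (by omega)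
  have d₃ := hu k (h + 1) (by omega)
  have d₄ := hu (k + 1) h (by omega)
  rw [show k + 1 + (h - 1) = k + h by omega] at d₂
  rw [show k + (h + 1) = k + h + 1 by omega] at d₃
  rw [show k + 1 + h = k + h + 1 by omega] at d₄
  exact hf.diffCoords_eq_of_dist_lt (hu.adj (by omega) k) (hu.adj (by omega) (k + h))
    (by omega) (by omega)

lemma eq_of_eqOn (hu₁ : IsCyclicIsometry G (2 * h) u₁) (hu₂ : IsCyclicIsometry G (2 * h) u₂)
    (hf : IsHammingEmbedding_s12 G f) (hconn : G.Connected) (hh : 0 < h)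
    (heq : Set.EqOn u₁ u₂ (Set.Iic (h + 1))) : u₁ = u₂ := by
  funext n
  induction n using Nat.strong_induction_on with
  | _ n ih =>
  rcases le_or_gt n (h + 1) with hn | hn
  · exact heq hn
  obtain ⟨k, rfl⟩ : ∃ k, n = k + h + 1 := ⟨n - h - 1, by omega⟩
  -- the edge ending at `u (k + h + 1)` is opposite to the edge from `u k` to `u (k + 1)`
  apply hf.eq_of_diffCoords_eq hconn (w := u₁ (k + h))
  rw [← hu₁.diffCoords_eq_antipodal hf hh k, ih k (by omega), ih (k + 1) (by omega),
    hu₂.diffCoords_eq_antipodal hf hh k, ih (k + h) (by omega)]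

end IsCyclicIsometry

lemma ZMod.min_val_natCast_val_neg {L d : ℕ} [NeZero L] (hd : d ≤ L) :
    min (d : ZMod L).val (-(d : ZMod L)).val = min d (L - d) := by
  rcases hd.lt_or_eq with hd | rfl
  · rw [ZMod.neg_val, ZMod.val_cast_of_lt hd]
    split_ifs with h0
    · have := ZMod.val_cast_of_lt hd
      rw [h0, ZMod.val_zero] at this
      omega
    · rfl
  · simp

namespace SimpleGraph.Walk

variable {G : SimpleGraph V} {a x y : V} {c : G.Walk a a}

def cycleVert (c : G.Walk a a) (k : ZMod c.length) : V := c.getVert k.val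

lemma cycleVert_natCast {i : ℕ} (hi : i ≤ c.length) : c.cycleVert i = c.getVert i := by
  rcases hi.lt_or_eq with hi | rfl
  · rw [cycleVert, ZMod.val_cast_of_lt hi]
  · rw [cycleVert, ZMod.natCast_self, ZMod.val_zero, getVert_zero, getVert_length]

variable [NeZero c.length]

lemma cycleVert_add_one (k : ZMod c.length) : c.cycleVert (k + 1) = c.getVert (k.val + 1) := by
  rw [← cycleVert_natCast (ZMod.val_lt k), Nat.cast_succ, ZMod.natCast_zmod_val]

lemma mem_support_iff_exists_cycleVert {z : V} : z ∈ c.support ↔ ∃ k, c.cycleVert k = z := by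
  rw [mem_support_iff_exists_getVert]
  constructor
  · rintro ⟨i, rfl, hi⟩
    exact ⟨i, cycleVert_natCast hi⟩
  · rintro ⟨k, rfl⟩
    exact ⟨k.val, rfl, (ZMod.val_lt k).le⟩

lemma mem_edges_iff_exists_cycleVert {e : Sym2 V} :
    e ∈ c.edges ↔ ∃ k, s(c.cycleVert k, c.cycleVert (k + 1)) = e := by
  induction e using Sym2.ind with
  | _ v w =>
  rw [mk_mem_edges_iff_exists]
  constructor
  · rintro ⟨i, hi, he⟩
    refine ⟨i, ?_⟩
    rw [← he, cycleVert_natCast hi.le, ← Nat.cast_succ, cycleVert_natCast hi]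
  · rintro ⟨k, he⟩
    exact ⟨k.val, ZMod.val_lt k, by rw [← he, cycleVert_add_one]; rfl⟩

lemma mem_edges_iff_exists_cycleVert_add {ε : ZMod c.length} (hε : ε = 1 ∨ ε = -1)
    {e : Sym2 V} : e ∈ c.edges ↔ ∃ k, s(c.cycleVert k, c.cycleVert (k + ε)) = e := by
  rcases hε with rfl | rfl
  · exact mem_edges_iff_exists_cycleVert
  rw [mem_edges_iff_exists_cycleVert]
  constructor
  · rintro ⟨k, rfl⟩
    exact ⟨k + 1, by rw [add_neg_cancel_right, Sym2.eq_swap]⟩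
  · rintro ⟨k, rfl⟩
    exact ⟨k - 1, by rw [sub_add_cancel, Sym2.eq_swap, sub_eq_add_neg]⟩

lemma IsCycle.cycleVert_injective (hc : c.IsCycle) : Function.Injective c.cycleVert := by
  intro k l h
  have := hc.three_le_length
  exact ZMod.val_injective _ <| hc.getVert_injOn'
    (by have := ZMod.val_lt k; simp only [Set.mem_ofPred_eq]; omega)
    (by have := ZMod.val_lt l; simp only [Set.mem_ofPred_eq]; omega) h

lemma IsCycle.eq_cycleVert_add_or_sub (hc : c.IsCycle) {ε : ZMod c.length}
    (hε : ε = 1 ∨ ε = -1) {k : ZMod c.length} {w : V} (hw : s(c.cycleVert k, w) ∈ c.edges) :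
    w = c.cycleVert (k + ε) ∨ w = c.cycleVert (k - ε) := by
  obtain ⟨l, hl⟩ := (mem_edges_iff_exists_cycleVert_add hε).1 hw
  rcases Sym2.eq_iff.1 hl with ⟨h₁, h₂⟩ | ⟨h₁, h₂⟩
  · left
    rw [← h₂, hc.cycleVert_injective h₁]
  · right
    rw [← h₁, ← hc.cycleVert_injective h₂, add_sub_cancel_right]

lemma IsCycle.exists_getVert_eq_cycleVert (hc : c.IsCycle) {p : G.Walk x y} (hp : p.IsPath)
    (hpc : ∀ e ∈ p.edges, e ∈ c.edges) (hm : 0 < p.length) :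
    ∃ s ε : ZMod c.length, (ε = 1 ∨ ε = -1) ∧
      ∀ j ≤ p.length, p.getVert j = c.cycleVert (s + ε * j) := by
  have hedge : ∀ j < p.length, s(p.getVert j, p.getVert (j + 1)) ∈ c.edges :=
    fun j hj => hpc _ (p.mk_mem_edges_iff_exists.2 ⟨j, hj, rfl⟩)
  obtain ⟨s, ε, hε, h₀, h₁⟩ : ∃ s ε : ZMod c.length, (ε = 1 ∨ ε = -1) ∧
      p.getVert 0 = c.cycleVert s ∧ p.getVert 1 = c.cycleVert (s + ε) := by
    obtain ⟨k, hk⟩ := mem_edges_iff_exists_cycleVert.1 (hedge 0 hm)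
    rcases Sym2.eq_iff.1 hk with ⟨h₀, h₁⟩ | ⟨h₁, h₀⟩
    · exact ⟨k, 1, .inl rfl, h₀.symm, h₁.symm⟩
    · exact ⟨k + 1, -1, .inr rfl, h₀.symm, by rw [add_neg_cancel_right, h₁]⟩
  refine ⟨s, ε, hε, ?_⟩
  -- a path along a cycle never turns back, so it keeps the direction of its first edge
  suffices h : ∀ j, j + 1 ≤ p.length → p.getVert j = c.cycleVert (s + ε * j) ∧
      p.getVert (j + 1) = c.cycleVert (s + ε * (j + 1 : ℕ)) by
    rintro (_ | j) hj
    · simpa using h₀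
    · exact (h j hj).2
  intro j
  induction j with
  | zero => exact fun _ => by simp [h₀, h₁]
  | succ j ih =>
    intro hj
    obtain ⟨hj₀, hj₁⟩ := ih (by omega)
    refine ⟨hj₁, ?_⟩
    have hne : p.getVert (j + 2) ≠ p.getVert j := fun h => by
      have := hp.getVert_injOn (by simp only [Set.mem_ofPred_eq]; omega)
        (by simp only [Set.mem_ofPred_eq]; omega) h
      omega
    have hnext := hc.eq_cycleVert_add_or_sub hε (hj₁ ▸ hedge (j + 1) hj)
    rw [show s + ε * ((j + 1 : ℕ) : ZMod c.length) - ε = s + ε * j by push_cast; ring] at hnext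
    rw [show s + ε * ((j + 1 + 1 : ℕ) : ZMod c.length) = s + ε * (j + 1 : ℕ) + ε by
      push_cast; ring]
    exact hnext.resolve_right (hj₀ ▸ hne)

end SimpleGraph.Walk

namespace IsIsometricCycle

open SimpleGraph.Walk

variable {G : SimpleGraph V} {a x y : V} {c : G.Walk a a}

lemma dist_cycleVert (hc : IsIsometricCycle G c) [NeZero c.length] (k l : ZMod c.length) :
    G.dist (c.cycleVert k) (c.cycleVert l) = min (l - k).val (k - l).val := by
  wlog hkl : k.val ≤ l.val generalizing k l
  · rw [dist_comm, min_comm, this l k (by omega)]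
  have h := hc.2 k.val l.val (ZMod.val_lt k).le (ZMod.val_lt l).le
  rw [max_eq_right hkl, min_eq_left hkl] at h
  rw [cycleVert, cycleVert, h, ZMod.val_sub hkl, ← neg_sub, ZMod.neg_val]
  split_ifs with h0
  · simp [sub_eq_zero.1 h0]
  · rw [ZMod.val_sub hkl]

lemma isCyclicIsometry (hc : IsIsometricCycle G c) [NeZero c.length] (s : ZMod c.length)
    {ε : ZMod c.length} (hε : ε = 1 ∨ ε = -1) :
    IsCyclicIsometry G c.length fun t => c.cycleVert (s + ε * t) := by
  intro i d hd
  rw [hc.dist_cycleVert, show s + ε * (i + d : ℕ) - (s + ε * i) = ε * d by push_cast; ring,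
    show s + ε * i - (s + ε * (i + d : ℕ)) = -(ε * d) by push_cast; ring,
    ← ZMod.min_val_natCast_val_neg hd]
  rcases hε with rfl | rfl
  · simp
  · simp [min_comm]

lemma exists_isCyclicIsometry_getVert_eq (hc : IsIsometricCycle G c) {p : G.Walk x y}
    (hp : p.IsPath) (hpc : ∀ e ∈ p.edges, e ∈ c.edges) (hm : 0 < p.length) :
    ∃ u : ℕ → V, IsCyclicIsometry G c.length u ∧ {z | z ∈ c.support} = Set.range u ∧
      {e | e ∈ c.edges} = Set.range (fun t => s(u t, u (t + 1))) ∧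
      ∀ j ≤ p.length, p.getVert j = u j := by
  have : NeZero c.length := ⟨by have := hc.1.three_le_length; omega⟩
  obtain ⟨s, ε, hε, hpu⟩ := hc.1.exists_getVert_eq_cycleVert hp hpc hm
  set g : ℕ → ZMod c.length := fun t => s + ε * t
  have hg : g.Surjective := fun k =>
    ⟨(ε * (k - s)).val, by simp only [g, ZMod.natCast_zmod_val]; rcases hε with rfl | rfl <;> ring⟩
  have hgsucc : ∀ t, g (t + 1) = g t + ε := fun t => by simp only [g]; push_cast; ring
  refine ⟨c.cycleVert ∘ g, hc.isCyclicIsometry s hε, ?_, ?_, hpu⟩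
  · rw [hg.range_comp]
    exact Set.ext fun _ => mem_support_iff_exists_cycleVert
  · have hrange : Set.range (fun t => s((c.cycleVert ∘ g) t, (c.cycleVert ∘ g) (t + 1))) =
        Set.range (fun k => s(c.cycleVert k, c.cycleVert (k + ε))) := by
      simp only [Function.comp_apply, hgsucc]
      exact hg.range_comp (fun k => s(c.cycleVert k, c.cycleVert (k + ε)))
    rw [hrange]
    exact Set.ext fun _ => mem_edges_iff_exists_cycleVert_add hε

end IsIsometricCycle

/-- if two isometric cycles of a partial cube intersect in a path with
`m` edges and `m > l1/2` (where `l1` is the length of the first cycle), then the two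
cycles are equal. -/
theorem stmt12 (G : SimpleGraph V) (h : IsPartialCube G) {a b x y : V}
    (c1 : G.Walk a a) (c2 : G.Walk b b)
    (h1 : IsIsometricCycle G c1) (h2 : IsIsometricCycle G c2)
    (p : G.Walk x y) (hp : p.IsPath)
    (hpe : ∀ e ∈ p.edges, e ∈ c1.edges ∧ e ∈ c2.edges)
    (hm : c1.length < 2 * p.length) :
    {e | e ∈ c1.edges} = {e | e ∈ c2.edges} ∧
    {z | z ∈ c1.support} = {z | z ∈ c2.support} := by
  obtain ⟨hconn, I, f, hf⟩ := h
  have hpc₁ e (he : e ∈ p.edges) := (hpe e he).1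
  have hpc₂ e (he : e ∈ p.edges) := (hpe e he).2
  obtain ⟨u₁, hu₁, hS₁, hE₁, hpu₁⟩ := h1.exists_isCyclicIsometry_getVert_eq hp hpc₁ (by omega)
  obtain ⟨u₂, hu₂, hS₂, hE₂, hpu₂⟩ := h2.exists_isCyclicIsometry_getVert_eq hp hpc₂ (by omega)
  have hl₁ := hp.isTrail.length_le_of_edges_subset hpc₁
  have hl₂ := hp.isTrail.length_le_of_edges_subset hpc₂
  -- both cycles compute the distance between the ends of `p`
  have hlen : c2.length = c1.length := by
    have d₁ := hu₁ 0 p.length hl₁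
    have d₂ := hu₂ 0 p.length hl₂
    rw [zero_add, ← hpu₁ 0 (Nat.zero_le _), ← hpu₁ p.length le_rfl] at d₁
    rw [zero_add, ← hpu₂ 0 (Nat.zero_le _), ← hpu₂ p.length le_rfl] at d₂
    omega
  obtain ⟨k, hk⟩ := (hu₁.even hf (by have := h1.1.three_le_length; omega)).two_dvd
  rw [hk] at hu₁
  rw [hlen, hk] at hu₂
  obtain rfl : u₁ = u₂ := hu₁.eq_of_eqOn hu₂ hf hconn (by omega) fun j hj => by
    have : j ≤ p.length := by rw [Set.mem_Iic] at hj; omega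
    rw [← hpu₁ j this, hpu₂ j this]
  exact ⟨hE₁.trans hE₂.symm, hS₁.trans hS₂.symm⟩
end
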